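/- arXiv:2508.12650 — 9 statements merged into one kernel-verified Lean document; each statement's English description precedes it below -/
import Mathlib

section
/- Under the ANM setup, for every node j ∈ V and every point x ∈ ℝ^D, the score admits the decomposition ∂_{x_j} log P(x) = (log p_j)'(x_j − f_j(x)) − ∑_{i ∈ V : j ∈ Pa(i)} (∂_{x_j} f_i(x)) · (log p_i)'(x_i − f_i(x)), where (log p_i)' denotes the derivative of the real function ε ↦ log p_i(ε). -/
/-!
Since `log P(x) = ∑ᵢ log pᵢ(xᵢ − fᵢ(x))`, the chain rule along `t ↦ update x j t` turns the
`i`-th term into `(log pᵢ)'(xᵢ − fᵢ(x)) · (δᵢⱼ − ∂ⱼfᵢ(x))`. The Kronecker deltas leave the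
`j`-th noise score, and `∂ⱼfᵢ` vanishes unless `j ∈ Pa(i)`.
-/

open Function

section ResidualScore

variable {ι : Type*} [Fintype ι] [DecidableEq ι]

theorem hasDerivAt_log_residual_update (q : ℝ → ℝ) (g : (ι → ℝ) → ℝ) (x : ι → ℝ) (i j : ι)
    (hq : DifferentiableAt ℝ q (x i - g x)) (hq0 : q (x i - g x) ≠ 0)
    (hg : DifferentiableAt ℝ g x) :
    HasDerivAt (fun t => Real.log (q (update x j t i - g (update x j t))))
      (deriv (fun ε => Real.log (q ε)) (x i - g x)
        * ((Pi.single j 1 : ι → ℝ) i - deriv (fun t => g (update x j t)) (x j))) (x j) := by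
  have hu := hasDerivAt_update x j (x j)
  have hgu : HasDerivAt (fun t => g (update x j t)) (deriv (fun t => g (update x j t)) (x j))
      (x j) :=
    ((update_eq_self j x ▸ hg).comp (x j) hu.differentiableAt).hasDerivAt
  have hresidual := (hasDerivAt_pi.1 hu i).sub hgu
  exact ((hq.log hq0).hasDerivAt).comp_of_eq (x j) hresidual (by rw [update_eq_self])

theorem deriv_log_prod_residual_update (p : ι → ℝ → ℝ) (f : ι → (ι → ℝ) → ℝ) (x : ι → ℝ)
    (j : ι) (hp0 : ∀ i ε, p i ε ≠ 0) (hp : ∀ i, DifferentiableAt ℝ (p i) (x i - f i x))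
    (hf : ∀ i, DifferentiableAt ℝ (f i) x) :
    deriv (fun t => Real.log (∏ i, p i (update x j t i - f i (update x j t)))) (x j)
      = deriv (fun ε => Real.log (p j ε)) (x j - f j x)
        - ∑ i, deriv (fun t => f i (update x j t)) (x j)
            * deriv (fun ε => Real.log (p i ε)) (x i - f i x) := by
  simp_rw [Real.log_prod fun i _ => hp0 i _]
  rw [(HasDerivAt.fun_sum fun i _ =>
    hasDerivAt_log_residual_update (p i) (f i) x i j (hp i) (hp0 i _) (hf i)).deriv]
  simp [mul_sub, Finset.sum_sub_distrib, mul_comm, Pi.single_apply]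

end ResidualScore

theorem anm_score_decomposition_general
    (D : ℕ) (Pa : Fin D → Set (Fin D)) [∀ j i, Decidable (j ∈ Pa i)]
    (p : Fin D → ℝ → ℝ)
    (hp_pos : ∀ i ε, 0 < p i ε)
    (hp_smooth : ∀ i, ContDiff ℝ 2 (p i))
    (f : Fin D → (Fin D → ℝ) → ℝ)
    (hf_smooth : ∀ i, ContDiff ℝ 2 (f i))
    (hf_dep : ∀ i j, j ∉ Pa i → ∀ (x : Fin D → ℝ) (t : ℝ),
      f i (Function.update x j t) = f i x)
    (P : (Fin D → ℝ) → ℝ)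
    (hP : ∀ x, P x = ∏ i, p i (x i - f i x))
    (S : Fin D → (Fin D → ℝ) → ℝ)
    (hS : ∀ j x, S j x = deriv (fun t => Real.log (P (Function.update x j t))) (x j))
    (j : Fin D) (x : Fin D → ℝ) :
    S j x
      = deriv (fun ε => Real.log (p j ε)) (x j - f j x)
        - ∑ i ∈ Finset.univ.filter (fun i => j ∈ Pa i),
            deriv (fun t => f i (Function.update x j t)) (x j)
              * deriv (fun ε => Real.log (p i ε)) (x i - f i x) := by
  have hnonparent : ∀ i, j ∉ Pa i → deriv (fun t => f i (update x j t)) (x j) = 0 :=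
    fun i hji => by simp [hf_dep i j hji]
  simp_rw [hS, hP]
  rw [deriv_log_prod_residual_update p f x j (fun i ε => (hp_pos i ε).ne')
    (fun i => (hp_smooth i).differentiable two_ne_zero _)
    (fun i => (hf_smooth i).differentiable two_ne_zero _),
    Finset.sum_filter_of_ne fun i _ hi => not_not.1 fun hji => hi (by simp [hnonparent i hji])]

/-- ANM score decomposition: `∂_{x_j} log P(x) = (log p_j)'(x_j − f_j(x))
    − ∑_{i : j ∈ Pa(i)} ∂_{x_j} f_i(x) · (log p_i)'(x_i − f_i(x))`. -/
theorem anm_score_decomposition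
    (D : ℕ) (Pa : Fin D → Set (Fin D)) [∀ j i, Decidable (j ∈ Pa i)]
    (hPa : ∀ i, i ∉ Pa i)
    (p : Fin D → ℝ → ℝ)
    (hp_pos : ∀ i ε, 0 < p i ε)
    (hp_smooth : ∀ i, ContDiff ℝ 2 (p i))
    (f : Fin D → (Fin D → ℝ) → ℝ)
    (hf_smooth : ∀ i, ContDiff ℝ 2 (f i))
    (hf_dep : ∀ i j, j ∉ Pa i → ∀ (x : Fin D → ℝ) (t : ℝ),
      f i (Function.update x j t) = f i x)
    (P : (Fin D → ℝ) → ℝ)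
    (hP : ∀ x, P x = ∏ i, p i (x i - f i x))
    (S : Fin D → (Fin D → ℝ) → ℝ)
    (hS : ∀ j x, S j x = deriv (fun t => Real.log (P (Function.update x j t))) (x j))
    (j : Fin D) (x : Fin D → ℝ) :
    S j x
      = deriv (fun ε => Real.log (p j ε)) (x j - f j x)
        - ∑ i ∈ Finset.univ.filter (fun i => j ∈ Pa i),
            deriv (fun t => f i (Function.update x j t)) (x j)
              * deriv (fun ε => Real.log (p i ε)) (x i - f i x) :=
  anm_score_decomposition_general D Pa p hp_pos hp_smooth f hf_smooth hf_dep P hP S hS j x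
end

section
/- Under the ANM setup, if l ∈ V is a leaf, then for every x ∈ ℝ^D the score in the l-th coordinate equals the noise score: S_l(x) = ∂_{x_l} log P(x) = (log p_l)'(x_l − f_l(x)). -/
/-! Since `l` is a leaf, moving `x` along the `l`-th coordinate changes no `f i`, so `P` restricted
to that line is `p l (t - f l x)` times a positive constant, which `log` turns into an additive
constant that the derivative ignores. -/

lemma Real.deriv_log_mul_const {g : ℝ → ℝ} {C : ℝ} (hg : ∀ t, g t ≠ 0) (hC : C ≠ 0) :
    deriv (fun t => Real.log (g t * C)) = deriv (fun t => Real.log (g t)) := by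
  have hsplit : (fun t => Real.log (g t * C)) = fun t => Real.log (g t) + Real.log C :=
    funext fun t => Real.log_mul (hg t) hC
  ext t
  rw [hsplit, deriv_add_const]

lemma Finset.prod_update_sub_eq_mul_prod_erase {ι M : Type*} [Fintype ι] [DecidableEq ι]
    [CommMonoid M] (g : ι → ℝ → M) (f : ι → (ι → ℝ) → ℝ) (l : ι)
    (hf : ∀ i x t, f i (Function.update x l t) = f i x) (x : ι → ℝ) (t : ℝ) :
    ∏ i, g i (Function.update x l t i - f i (Function.update x l t)) =
      g l (t - f l x) * ∏ i ∈ Finset.univ.erase l, g i (x i - f i x) := by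
  rw [← Finset.mul_prod_erase Finset.univ _ (Finset.mem_univ l), hf, Function.update_self]
  congr 1
  refine Finset.prod_congr rfl fun i hi => ?_
  rw [hf, Function.update_of_ne (Finset.ne_of_mem_erase hi)]

theorem anm_leaf_score_general
    (D : ℕ) (Pa : Fin D → Set (Fin D))
    (p : Fin D → ℝ → ℝ)
    (hp_pos : ∀ i ε, 0 < p i ε)
    (f : Fin D → (Fin D → ℝ) → ℝ)
    (hf_dep : ∀ i j, j ∉ Pa i → ∀ (x : Fin D → ℝ) (t : ℝ),
      f i (Function.update x j t) = f i x)
    (P : (Fin D → ℝ) → ℝ)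
    (hP : ∀ x, P x = ∏ i, p i (x i - f i x))
    (S : Fin D → (Fin D → ℝ) → ℝ)
    (hS : ∀ j x, S j x = deriv (fun t => Real.log (P (Function.update x j t))) (x j))
    (l : Fin D) (hleaf : ∀ i, l ∉ Pa i)
    (x : Fin D → ℝ) :
    S l x = deriv (fun ε => Real.log (p l ε)) (x l - f l x) := by
  have hP_line : ∀ t, P (Function.update x l t) =
      p l (t - f l x) * ∏ i ∈ Finset.univ.erase l, p i (x i - f i x) := fun t => by
    rw [hP, Finset.prod_update_sub_eq_mul_prod_erase p f l (fun i => hf_dep i l (hleaf i))]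
  simp only [hS, hP_line]
  rw [Real.deriv_log_mul_const (fun t => (hp_pos l _).ne')
    (Finset.prod_pos fun i _ => hp_pos i _).ne']
  exact deriv_comp_sub_const (fun ε => Real.log (p l ε)) (f l x) (x l)

/-- ANM leaf score: if `l` is a leaf, then `S_l(x) = (log p_l)'(x_l − f_l(x))`. -/
theorem anm_leaf_score
    (D : ℕ) (Pa : Fin D → Set (Fin D))
    (hPa : ∀ i, i ∉ Pa i)
    (p : Fin D → ℝ → ℝ)
    (hp_pos : ∀ i ε, 0 < p i ε)
    (hp_smooth : ∀ i, ContDiff ℝ 2 (p i))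
    (f : Fin D → (Fin D → ℝ) → ℝ)
    (hf_smooth : ∀ i, ContDiff ℝ 2 (f i))
    (hf_dep : ∀ i j, j ∉ Pa i → ∀ (x : Fin D → ℝ) (t : ℝ),
      f i (Function.update x j t) = f i x)
    (P : (Fin D → ℝ) → ℝ)
    (hP : ∀ x, P x = ∏ i, p i (x i - f i x))
    (S : Fin D → (Fin D → ℝ) → ℝ)
    (hS : ∀ j x, S j x = deriv (fun t => Real.log (P (Function.update x j t))) (x j))
    (l : Fin D) (hleaf : ∀ i, l ∉ Pa i)
    (x : Fin D → ℝ) :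
    S l x = deriv (fun ε => Real.log (p l ε)) (x l - f l x) :=
  anm_leaf_score_general D Pa p hp_pos f hf_dep P hP S hS l hleaf x
end

section
/- Under the ANM setup, if l ∈ V is a leaf, j ∈ V with j ≠ l, and x ∈ ℝ^D satisfies (log p_l)''(x_l − f_l(x)) ≠ 0, then the residue term of the deciduous score satisfies the identity (∂_{x_j} S_l(x)) · S_l(x) / (∂_{x_l} S_l(x)) = −(∂_{x_j} f_l(x)) · (log p_l)'(x_l − f_l(x)). -/
/-!
At a leaf `l` no other factor of `P` involves `x_l`, so `S_l(x) = g'(x_l - f_l(x))` with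
`g = log p_l`. Differentiating this along `x_l` gives `g''(x_l - f_l(x))`, and along `x_j`
gives `-g''(x_l - f_l(x)) · ∂_j f_l(x)` by the chain rule; the curvature factor `g''` cancels
in the quotient.
-/

section AdditiveNoise

variable {ι : Type*} [DecidableEq ι] {l : ι}

lemma log_prod_update_leaf [Fintype ι] {p : ι → ℝ → ℝ} {f : ι → (ι → ℝ) → ℝ}
    (hp : ∀ i e, 0 < p i e) (hl : ∀ i y t, f i (Function.update y l t) = f i y)
    (y : ι → ℝ) (t : ℝ) :
    Real.log (∏ i, p i (Function.update y l t i - f i (Function.update y l t))) =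
      Real.log (p l (t - f l y)) + Real.log (∏ i ∈ {l}ᶜ, p i (y i - f i y)) := by
  have hprod : ∏ i, p i (Function.update y l t i - f i (Function.update y l t)) =
      p l (t - f l y) * ∏ i ∈ {l}ᶜ, p i (y i - f i y) := by
    rw [Fintype.prod_eq_mul_prod_compl l, Function.update_self, hl]
    congr 1
    refine Finset.prod_congr rfl fun i hi => ?_
    rw [Function.update_of_ne (by simpa using hi), hl]
  rw [hprod, Real.log_mul (hp l _).ne' (Finset.prod_pos fun i _ => hp i _).ne']

lemma deriv_log_prod_update_leaf [Fintype ι] {p : ι → ℝ → ℝ} {f : ι → (ι → ℝ) → ℝ}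
    (hp : ∀ i e, 0 < p i e) (hl : ∀ i y t, f i (Function.update y l t) = f i y) (y : ι → ℝ) :
    deriv (fun t => Real.log
        (∏ i, p i (Function.update y l t i - f i (Function.update y l t)))) (y l) =
      deriv (fun e => Real.log (p l e)) (y l - f l y) := by
  simp_rw [log_prod_update_leaf hp hl y]
  rw [deriv_add_const]
  exact deriv_comp_sub_const (f := fun e => Real.log (p l e)) _ _

variable {F : (ι → ℝ) → ℝ} {h : ℝ → ℝ}

lemma deriv_comp_sub_update_self (hl : ∀ y t, F (Function.update y l t) = F y) (y : ι → ℝ) :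
    deriv (fun t => h (Function.update y l t l - F (Function.update y l t))) (y l) =
      deriv h (y l - F y) := by
  simp_rw [Function.update_self, hl]
  exact deriv_comp_sub_const (f := h) _ _

lemma deriv_comp_sub_update_of_ne {j : ι} (hjl : j ≠ l) {y : ι → ℝ}
    (hh : DifferentiableAt ℝ h (y l - F y))
    (hF : DifferentiableAt ℝ (fun t => F (Function.update y j t)) (y j)) :
    deriv (fun t => h (Function.update y j t l - F (Function.update y j t))) (y j) =
      -deriv h (y l - F y) * deriv (fun t => F (Function.update y j t)) (y j) := by
  simp_rw [Function.update_of_ne hjl.symm]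
  have hinner : HasDerivAt (fun t => y l - F (Function.update y j t))
      (-deriv (fun t => F (Function.update y j t)) (y j)) (y j) :=
    hF.hasDerivAt.const_sub (y l)
  have houter : HasDerivAt h (deriv h (y l - F y)) (y l - F (Function.update y j (y j))) := by
    rw [Function.update_eq_self]
    exact hh.hasDerivAt
  exact (houter.comp (y j) hinner).deriv.trans (by ring)

end AdditiveNoise

theorem anm_residue_identity_general
    (D : ℕ) (Pa : Fin D → Set (Fin D))
    (p : Fin D → ℝ → ℝ)
    (hp_pos : ∀ i ε, 0 < p i ε)
    (f : Fin D → (Fin D → ℝ) → ℝ)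
    (hf_smooth : ∀ i, ContDiff ℝ 2 (f i))
    (hf_dep : ∀ i j, j ∉ Pa i → ∀ (x : Fin D → ℝ) (t : ℝ),
      f i (Function.update x j t) = f i x)
    (P : (Fin D → ℝ) → ℝ)
    (hP : ∀ x, P x = ∏ i, p i (x i - f i x))
    (S : Fin D → (Fin D → ℝ) → ℝ)
    (hS : ∀ j x, S j x = deriv (fun t => Real.log (P (Function.update x j t))) (x j))
    (l : Fin D) (hleaf : ∀ i, l ∉ Pa i)
    (j : Fin D) (hjl : j ≠ l)
    (x : Fin D → ℝ)
    (hcurv : deriv (deriv (fun e => Real.log (p l e))) (x l - f l x) ≠ 0) :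
    deriv (fun t => S l (Function.update x j t)) (x j) * S l x
        / deriv (fun t => S l (Function.update x l t)) (x l)
      = -(deriv (fun t => f l (Function.update x j t)) (x j))
          * deriv (fun e => Real.log (p l e)) (x l - f l x) := by
  have hf_leaf : ∀ i y t, f i (Function.update y l t) = f i y :=
    fun i => hf_dep i l (hleaf i)
  have hS_leaf : ∀ y, S l y = deriv (fun e => Real.log (p l e)) (y l - f l y) := fun y => by
    simp_rw [hS, hP, deriv_log_prod_update_leaf hp_pos hf_leaf]
  have hf_line : DifferentiableAt ℝ (fun t => f l (Function.update x j t)) (x j) :=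
    ((hf_smooth l).differentiable (by norm_num)).differentiableAt.comp _
      (hasDerivAt_update x j (x j)).differentiableAt
  simp_rw [hS_leaf]
  rw [deriv_comp_sub_update_self (hf_leaf l),
    deriv_comp_sub_update_of_ne hjl (differentiableAt_of_deriv_ne_zero hcurv) hf_line]
  field_simp

/-- ANM residue identity: if `l` is a leaf, `j ≠ l`, and
    `(log p_l)''(x_l − f_l(x)) ≠ 0`, then
    `∂_{x_j} S_l(x) · S_l(x) / ∂_{x_l} S_l(x) = −∂_{x_j} f_l(x) · (log p_l)'(x_l − f_l(x))`. -/
theorem anm_residue_identity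
    (D : ℕ) (Pa : Fin D → Set (Fin D))
    (hPa : ∀ i, i ∉ Pa i)
    (p : Fin D → ℝ → ℝ)
    (hp_pos : ∀ i ε, 0 < p i ε)
    (hp_smooth : ∀ i, ContDiff ℝ 2 (p i))
    (f : Fin D → (Fin D → ℝ) → ℝ)
    (hf_smooth : ∀ i, ContDiff ℝ 2 (f i))
    (hf_dep : ∀ i j, j ∉ Pa i → ∀ (x : Fin D → ℝ) (t : ℝ),
      f i (Function.update x j t) = f i x)
    (P : (Fin D → ℝ) → ℝ)
    (hP : ∀ x, P x = ∏ i, p i (x i - f i x))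
    (S : Fin D → (Fin D → ℝ) → ℝ)
    (hS : ∀ j x, S j x = deriv (fun t => Real.log (P (Function.update x j t))) (x j))
    (l : Fin D) (hleaf : ∀ i, l ∉ Pa i)
    (j : Fin D) (hjl : j ≠ l)
    (x : Fin D → ℝ)
    (hcurv : deriv (deriv (fun e => Real.log (p l e))) (x l - f l x) ≠ 0) :
    deriv (fun t => S l (Function.update x j t)) (x j) * S l x
        / deriv (fun t => S l (Function.update x l t)) (x l)
      = -(deriv (fun t => f l (Function.update x j t)) (x j))
          * deriv (fun e => Real.log (p l e)) (x l - f l x) :=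
  anm_residue_identity_general D Pa p hp_pos f hf_smooth hf_dep P hP S hS l hleaf j hjl x hcurv
end

section
/- Under the ANM setup, if l ∈ V is a leaf, j ∈ V with j ≠ l, and x ∈ ℝ^D satisfies (log p_l)''(x_l − f_l(x)) ≠ 0, then the score of the marginalized density can be expressed entirely in terms of the full score and its derivatives: ∂_{x_j} log P_{-l}(x) = S_j(x) − (∂_{x_j} S_l(x)) · S_l(x) / (∂_{x_l} S_l(x)), where P_{-l}(x) = ∏_{i ≠ l} p_i(x_i − f_i(x)). -/
/-!
Write `u = x_l - f_l(x)` and `L = log p_l`. Because `l` is a leaf, no `f_i` depends on `x_l`, so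
`log P = L(x_l - f_l(x)) + log P_{-l}(x)` with `P_{-l}` independent of `x_l`. Hence `S_l = L'(u)`,
`∂_l S_l = L''(u)` and `∂_j S_l = -L''(u) ∂_j f_l`, while `S_j = -L'(u) ∂_j f_l + ∂_j log P_{-l}`.
Eliminating the unknown `∂_j f_l = -∂_j S_l / ∂_l S_l` (possible as `L''(u) ≠ 0`) gives the formula.
-/

open Function Finset Real

variable {ι : Type*}

theorem differentiable_log_prod [Fintype ι] {p : ι → ℝ → ℝ} {f : ι → (ι → ℝ) → ℝ}
    (hp_pos : ∀ i ε, 0 < p i ε) (hp : ∀ i, Differentiable ℝ (p i))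
    (hf : ∀ i, Differentiable ℝ (f i)) (s : Finset ι) :
    Differentiable ℝ (fun y => log (∏ i ∈ s, p i (y i - f i y))) := by
  have hprod : Differentiable ℝ (fun y => ∏ i ∈ s, p i (y i - f i y)) := by fun_prop
  exact hprod.log fun _ => (prod_pos fun i _ => hp_pos i _).ne'

variable [DecidableEq ι]

theorem DifferentiableAt.comp_update [Fintype ι] {g : (ι → ℝ) → ℝ} {y : ι → ℝ}
    (hg : DifferentiableAt ℝ g y) (j : ι) :
    DifferentiableAt ℝ (fun t => g (update y j t)) (y j) := by
  rw [← update_eq_self j y] at hg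
  exact hg.comp (y j) (hasDerivAt_update y j (y j)).differentiableAt

theorem deriv_comp_sub_update_of_update_invariant (h : ℝ → ℝ) {φ : (ι → ℝ) → ℝ}
    {y : ι → ℝ} {l : ι} (hφ : ∀ t, φ (update y l t) = φ y) :
    deriv (fun t => h (update y l t l - φ (update y l t))) (y l) = deriv h (y l - φ y) := by
  simp only [update_self, hφ]
  exact deriv_comp_sub_const ..

theorem hasDerivAt_comp_sub_update [Fintype ι] {h : ℝ → ℝ} {φ : (ι → ℝ) → ℝ} {y : ι → ℝ}
    {j l : ι} (hjl : j ≠ l) (hh : DifferentiableAt ℝ h (y l - φ y))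
    (hφ : DifferentiableAt ℝ φ y) :
    HasDerivAt (fun t => h (update y j t l - φ (update y j t)))
      (-(deriv h (y l - φ y) * deriv (fun t => φ (update y j t)) (y j))) (y j) := by
  have hinner : HasDerivAt (fun t => y l - φ (update y j t))
      (-deriv (fun t => φ (update y j t)) (y j)) (y j) :=
    (hφ.comp_update j).hasDerivAt.const_sub (y l)
  have hh' : HasDerivAt h (deriv h (y l - φ y)) (y l - φ (update y j (y j))) := by
    rw [update_eq_self]
    exact hh.hasDerivAt
  simp only [update_of_ne hjl.symm]
  rw [← mul_neg]
  exact hh'.comp (y j) hinner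

theorem log_prod_eq_log_add_log_prod_erase [Fintype ι] {a : ι → ℝ} (ha : ∀ i, 0 < a i)
    (l : ι) : log (∏ i, a i) = log (a l) + log (∏ i ∈ univ.erase l, a i) := by
  rw [← mul_prod_erase univ a (mem_univ l),
    log_mul (ha l).ne' (prod_pos fun i _ => ha i).ne']

section AdditiveNoise

variable [Fintype ι] {p : ι → ℝ → ℝ} {f : ι → (ι → ℝ) → ℝ} {l : ι}

theorem prod_erase_update_of_leaf (hleaf : ∀ i y t, f i (update y l t) = f i y)
    (y : ι → ℝ) (t : ℝ) :
    ∏ i ∈ univ.erase l, p i (update y l t i - f i (update y l t))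
      = ∏ i ∈ univ.erase l, p i (y i - f i y) :=
  prod_congr rfl fun i hi => by rw [hleaf, update_of_ne (ne_of_mem_erase hi)]

theorem deriv_log_density_leaf (hp_pos : ∀ i ε, 0 < p i ε)
    (hleaf : ∀ i y t, f i (update y l t) = f i y) (y : ι → ℝ) :
    deriv (fun t => log (∏ i, p i (update y l t i - f i (update y l t)))) (y l)
      = deriv (fun e => log (p l e)) (y l - f l y) := by
  simp only [log_prod_eq_log_add_log_prod_erase (fun i => hp_pos i _) l,
    prod_erase_update_of_leaf hleaf, deriv_add_const]
  exact deriv_comp_sub_update_of_update_invariant (fun e => log (p l e)) (hleaf l y)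

theorem deriv_log_density_of_ne (hp_pos : ∀ i ε, 0 < p i ε) (hp : ∀ i, Differentiable ℝ (p i))
    (hf : ∀ i, Differentiable ℝ (f i)) {j : ι} (hjl : j ≠ l) (y : ι → ℝ) :
    deriv (fun t => log (∏ i, p i (update y j t i - f i (update y j t)))) (y j)
      = -(deriv (fun e => log (p l e)) (y l - f l y) * deriv (fun t => f l (update y j t)) (y j))
        + deriv (fun t => log (∏ i ∈ univ.erase l, p i (update y j t i - f i (update y j t))))
          (y j) := by
  have hlog_pl := hasDerivAt_comp_sub_update hjl
    (((hp l).log fun e => (hp_pos l e).ne') _) (hf l y)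
  have hlog_marginal := (differentiable_log_prod hp_pos hp hf (univ.erase l) y).comp_update j
  simp only [log_prod_eq_log_add_log_prod_erase (fun i => hp_pos i _) l]
  rw [deriv_fun_add hlog_pl.differentiableAt hlog_marginal, hlog_pl.deriv]

end AdditiveNoise

theorem anm_deciduous_score_via_score_general
    (D : ℕ) (Pa : Fin D → Set (Fin D))
    (p : Fin D → ℝ → ℝ)
    (hp_pos : ∀ i ε, 0 < p i ε)
    (hp_smooth : ∀ i, ContDiff ℝ 2 (p i))
    (f : Fin D → (Fin D → ℝ) → ℝ)
    (hf_smooth : ∀ i, ContDiff ℝ 2 (f i))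
    (hf_dep : ∀ i j, j ∉ Pa i → ∀ (x : Fin D → ℝ) (t : ℝ),
      f i (Function.update x j t) = f i x)
    (P : (Fin D → ℝ) → ℝ)
    (hP : ∀ x, P x = ∏ i, p i (x i - f i x))
    (S : Fin D → (Fin D → ℝ) → ℝ)
    (hS : ∀ j x, S j x = deriv (fun t => Real.log (P (Function.update x j t))) (x j))
    (l : Fin D) (hleaf : ∀ i, l ∉ Pa i)
    (Pml : (Fin D → ℝ) → ℝ)
    (hPml : ∀ x, Pml x = ∏ i ∈ Finset.univ.erase l, p i (x i - f i x))
    (j : Fin D) (hjl : j ≠ l)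
    (x : Fin D → ℝ)
    (hcurv : deriv (deriv (fun e => Real.log (p l e))) (x l - f l x) ≠ 0) :
    deriv (fun t => Real.log (Pml (Function.update x j t))) (x j)
      = S j x - deriv (fun t => S l (Function.update x j t)) (x j) * S l x
          / deriv (fun t => S l (Function.update x l t)) (x l) := by
  obtain rfl : P = fun y => ∏ i, p i (y i - f i y) := funext hP
  obtain rfl : Pml = fun y => ∏ i ∈ univ.erase l, p i (y i - f i y) := funext hPml
  set L := fun e => log (p l e)
  have hL : ContDiff ℝ 2 L := (hp_smooth l).log fun e => (hp_pos l e).ne'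
  have hp : ∀ i, Differentiable ℝ (p i) := fun i => (hp_smooth i).differentiable two_ne_zero
  have hf : ∀ i, Differentiable ℝ (f i) := fun i => (hf_smooth i).differentiable two_ne_zero
  have hinv : ∀ i y t, f i (update y l t) = f i y := fun i => hf_dep i l (hleaf i)
  have hSl : S l = fun y => deriv L (y l - f l y) :=
    funext fun y => (hS l y).trans (deriv_log_density_leaf hp_pos hinv y)
  have hdenom : deriv (fun t => S l (update x l t)) (x l) = deriv (deriv L) (x l - f l x) := by
    rw [hSl]
    exact deriv_comp_sub_update_of_update_invariant _ (hinv l x)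
  have hnum : deriv (fun t => S l (update x j t)) (x j)
      = -(deriv (deriv L) (x l - f l x) * deriv (fun t => f l (update x j t)) (x j)) := by
    rw [hSl]
    exact (hasDerivAt_comp_sub_update hjl (hL.differentiable_deriv_two _) (hf l x)).deriv
  rw [hS j x, deriv_log_density_of_ne hp_pos hp hf hjl x, hdenom, hnum, hSl]
  field_simp
  ring

/-- ANM deciduous score (score form): if `l` is a leaf, `j ≠ l`, and
    `(log p_l)''(x_l − f_l(x)) ≠ 0`, then
    `∂_{x_j} log P_{-l}(x) = S_j(x) − ∂_{x_j} S_l(x) · S_l(x) / ∂_{x_l} S_l(x)`. -/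
theorem anm_deciduous_score_via_score
    (D : ℕ) (Pa : Fin D → Set (Fin D))
    (hPa : ∀ i, i ∉ Pa i)
    (p : Fin D → ℝ → ℝ)
    (hp_pos : ∀ i ε, 0 < p i ε)
    (hp_smooth : ∀ i, ContDiff ℝ 2 (p i))
    (f : Fin D → (Fin D → ℝ) → ℝ)
    (hf_smooth : ∀ i, ContDiff ℝ 2 (f i))
    (hf_dep : ∀ i j, j ∉ Pa i → ∀ (x : Fin D → ℝ) (t : ℝ),
      f i (Function.update x j t) = f i x)
    (P : (Fin D → ℝ) → ℝ)
    (hP : ∀ x, P x = ∏ i, p i (x i - f i x))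
    (S : Fin D → (Fin D → ℝ) → ℝ)
    (hS : ∀ j x, S j x = deriv (fun t => Real.log (P (Function.update x j t))) (x j))
    (l : Fin D) (hleaf : ∀ i, l ∉ Pa i)
    (Pml : (Fin D → ℝ) → ℝ)
    (hPml : ∀ x, Pml x = ∏ i ∈ Finset.univ.erase l, p i (x i - f i x))
    (j : Fin D) (hjl : j ≠ l)
    (x : Fin D → ℝ)
    (hcurv : deriv (deriv (fun e => Real.log (p l e))) (x l - f l x) ≠ 0) :
    deriv (fun t => Real.log (Pml (Function.update x j t))) (x j)
      = S j x - deriv (fun t => S l (Function.update x j t)) (x j) * S l x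
          / deriv (fun t => S l (Function.update x l t)) (x l) :=
  anm_deciduous_score_via_score_general D Pa p hp_pos hp_smooth f hf_smooth hf_dep P hP S hS l hleaf
    Pml hPml j hjl x hcurv
end

section
/- Under the ANM setup, let L ⊆ V be a sink set and define P_{-L}(x) = ∏_{i ∈ V \ L} p_i(x_i − f_i(x)). Then for every j ∈ V \ L and every x ∈ ℝ^D, the deciduous (marginalized) score equals the full score plus the sum of residue terms over the removed nodes: ∂_{x_j} log P_{-L}(x) = S_j(x) + ∑_{l ∈ L} (∂_{x_j} f_l(x)) · (log p_l)'(x_l − f_l(x)). -/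
/-!
Taking logarithms turns each density into a sum over nodes of `log p_i (x_i - f_i x)`, and along
the line `t ↦ update x j t` the `i`-th term has derivative `(log p_i)'(ε_i) (δ_ij - ∂_j f_i)`,
where `ε_i = x_i - f_i x`.
The marginalized density just drops the terms with `l ∈ L`; as `j ∉ L`, each dropped term is
`-∂_j f_l (log p_l)'(ε_l)`.
-/

open Real Finset

theorem hasDerivAt_log_prod {ι : Type*} {s : Finset ι} {u : ι → ℝ → ℝ} {d : ι → ℝ} {t : ℝ}
    (hu : ∀ i ∈ s, ∀ t, u i t ≠ 0) (hd : ∀ i ∈ s, HasDerivAt (fun t => log (u i t)) (d i) t) :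
    HasDerivAt (fun t => log (∏ i ∈ s, u i t)) (∑ i ∈ s, d i) t := by
  have hlog : (fun t => log (∏ i ∈ s, u i t)) = fun t => ∑ i ∈ s, log (u i t) :=
    funext fun t => log_prod fun i hi => hu i hi t
  rw [hlog]
  exact HasDerivAt.fun_sum hd

theorem hasDerivAt_log_comp_residual_update {ι : Type*} [Fintype ι] [DecidableEq ι]
    {p : ℝ → ℝ} {g : (ι → ℝ) → ℝ} {x : ι → ℝ} {i : ι} (j : ι)
    (hp : DifferentiableAt ℝ p (x i - g x)) (hp0 : p (x i - g x) ≠ 0)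
    (hg : DifferentiableAt ℝ g x) :
    HasDerivAt (fun t => log (p (Function.update x j t i - g (Function.update x j t))))
      (deriv (fun e => log (p e)) (x i - g x) *
        ((Pi.single j 1 : ι → ℝ) i - deriv (fun t => g (Function.update x j t)) (x j))) (x j) := by
  have hline : HasDerivAt (Function.update x j) (Pi.single j 1) (x j) := hasDerivAt_update x j (x j)
  have hx : Function.update x j (x j) = x := Function.update_eq_self j x
  have hres : HasDerivAt (fun t => Function.update x j t i - g (Function.update x j t))
      ((Pi.single j 1 : ι → ℝ) i - deriv (fun t => g (Function.update x j t)) (x j)) (x j) := by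
    refine (hasDerivAt_pi.1 hline i).sub (DifferentiableAt.hasDerivAt ?_)
    exact (hx ▸ hg).comp (x j) hline.differentiableAt
  exact (hp.log hp0).hasDerivAt.comp_of_eq (x j) hres (by rw [hx])

theorem anm_sink_deciduous_score_general
    (D : ℕ)
    (p : Fin D → ℝ → ℝ)
    (hp_pos : ∀ i ε, 0 < p i ε)
    (hp_smooth : ∀ i, ContDiff ℝ 2 (p i))
    (f : Fin D → (Fin D → ℝ) → ℝ)
    (hf_smooth : ∀ i, ContDiff ℝ 2 (f i))
    (P : (Fin D → ℝ) → ℝ)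
    (hP : ∀ x, P x = ∏ i, p i (x i - f i x))
    (S : Fin D → (Fin D → ℝ) → ℝ)
    (hS : ∀ j x, S j x = deriv (fun t => Real.log (P (Function.update x j t))) (x j))
    (L : Finset (Fin D))
    (PmL : (Fin D → ℝ) → ℝ)
    (hPmL : ∀ x, PmL x = ∏ i ∈ Lᶜ, p i (x i - f i x))
    (j : Fin D) (hjL : j ∉ L)
    (x : Fin D → ℝ) :
    deriv (fun t => Real.log (PmL (Function.update x j t))) (x j)
      = S j x + ∑ l ∈ L, deriv (fun t => f l (Function.update x j t)) (x j)
          * deriv (fun e => Real.log (p l e)) (x l - f l x) := by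
  set e : Fin D → ℝ := fun i => deriv (fun ε => log (p i ε)) (x i - f i x) *
    ((Pi.single j 1 : Fin D → ℝ) i - deriv (fun t => f i (Function.update x j t)) (x j))
  have he : ∀ s : Finset (Fin D), HasDerivAt
      (fun t => log (∏ i ∈ s, p i (Function.update x j t i - f i (Function.update x j t))))
      (∑ i ∈ s, e i) (x j) :=
    fun s => hasDerivAt_log_prod (fun i _ _ => (hp_pos i _).ne') fun i _ =>
      hasDerivAt_log_comp_residual_update j ((hp_smooth i).differentiable two_ne_zero _)
        (hp_pos i _).ne' ((hf_smooth i).differentiable two_ne_zero _)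
  have hS_sum : S j x = ∑ i, e i := by
    simpa only [hS, hP] using (he univ).deriv
  have hPmL_sum : deriv (fun t => log (PmL (Function.update x j t))) (x j) = ∑ i ∈ Lᶜ, e i := by
    simpa only [hPmL] using (he Lᶜ).deriv
  have he_sink : ∀ l ∈ L, e l = -(deriv (fun t => f l (Function.update x j t)) (x j) *
      deriv (fun ε => log (p l ε)) (x l - f l x)) := fun l hl => by
    simp only [e, Pi.single_eq_of_ne (ne_of_mem_of_not_mem hl hjL)]
    ring
  rw [hPmL_sum, hS_sum, ← sum_add_sum_compl L e, sum_congr rfl he_sink, sum_neg_distrib]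
  ring

/-- ANM deciduous score over a sink set: for `j ∉ L`,
    `∂_{x_j} log P_{-L}(x) = S_j(x) + ∑_{l ∈ L} ∂_{x_j} f_l(x) · (log p_l)'(x_l − f_l(x))`. -/
theorem anm_sink_deciduous_score
    (D : ℕ) (Pa : Fin D → Set (Fin D))
    (hPa : ∀ i, i ∉ Pa i)
    (p : Fin D → ℝ → ℝ)
    (hp_pos : ∀ i ε, 0 < p i ε)
    (hp_smooth : ∀ i, ContDiff ℝ 2 (p i))
    (f : Fin D → (Fin D → ℝ) → ℝ)
    (hf_smooth : ∀ i, ContDiff ℝ 2 (f i))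
    (hf_dep : ∀ i j, j ∉ Pa i → ∀ (x : Fin D → ℝ) (t : ℝ),
      f i (Function.update x j t) = f i x)
    (P : (Fin D → ℝ) → ℝ)
    (hP : ∀ x, P x = ∏ i, p i (x i - f i x))
    (S : Fin D → (Fin D → ℝ) → ℝ)
    (hS : ∀ j x, S j x = deriv (fun t => Real.log (P (Function.update x j t))) (x j))
    (L : Finset (Fin D))
    (hSink : ∀ j ∈ L, ∀ i, i ∉ L → j ∉ Pa i)
    (PmL : (Fin D → ℝ) → ℝ)
    (hPmL : ∀ x, PmL x = ∏ i ∈ Lᶜ, p i (x i - f i x))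
    (j : Fin D) (hjL : j ∉ L)
    (x : Fin D → ℝ) :
    deriv (fun t => Real.log (PmL (Function.update x j t))) (x j)
      = S j x + ∑ l ∈ L, deriv (fun t => f l (Function.update x j t)) (x j)
          * deriv (fun e => Real.log (p l e)) (x l - f l x) :=
  anm_sink_deciduous_score_general D p hp_pos hp_smooth f hf_smooth P hP S hS L PmL hPmL j hjL x
end

section
/- Under the ANM setup, let L ⊆ V be a sink set and define P_{-L}(x) = ∏_{i ∈ V \ L} p_i(x_i − f_i(x)). Then for every j ∈ V \ L and every x ∈ ℝ^D, the Hessian diagonal of the marginalized log-density satisfies ∂²_{x_j x_j} log P_{-L}(x) = 𝒟_j(x) + ∑_{l ∈ L} [ (∂²_{x_j x_j} f_l(x)) · (log p_l)'(x_l − f_l(x)) − (∂_{x_j} f_l(x))² · (log p_l)''(x_l − f_l(x)) ]. -/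
open Real

/-!
Along the coordinate line `t ↦ update x j t`, the logarithm turns both `P` and `P_{-L}` into sums
of the one-variable terms `log p_i (x_i − f_i(x))`, so `log P = log P_{-L} + ∑_{l ∈ L} log p_l (…)`
and second derivatives split accordingly. For `l ∈ L` the coordinate `x_l` is not moved by the
line (as `j ∉ L`), so the term is `t ↦ log p_l (c − f_l(update x j t))`, whose second derivative
is given by the chain rule.
-/

open Function Finset

section SecondDerivative

variable {q h : ℝ → ℝ}

lemma ContDiff.differentiable_deriv_of_two (hq : ContDiff ℝ 2 q) : Differentiable ℝ (deriv q) :=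
  (ContDiff.deriv' (n := 1) hq).differentiable one_ne_zero

lemma deriv_deriv_comp_const_sub (hq : ContDiff ℝ 2 q) (hh : ContDiff ℝ 2 h) (c s : ℝ) :
    deriv (deriv fun t => q (c - h t)) s
      = deriv h s ^ 2 * deriv (deriv q) (c - h s) - deriv (deriv h) s * deriv q (c - h s) := by
  have hq₁ : Differentiable ℝ q := hq.differentiable two_ne_zero
  have hh₁ : Differentiable ℝ h := hh.differentiable two_ne_zero
  have hq₂ := hq.differentiable_deriv_of_two
  have hh₂ := hh.differentiable_deriv_of_two
  have chain : ∀ {r : ℝ → ℝ}, Differentiable ℝ r →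
      deriv (fun t => r (c - h t)) = fun t => deriv r (c - h t) * -deriv h t := by
    intro r hr
    funext t
    rw [← comp_def r, deriv_comp t (hr _) ((hh₁ t).const_sub c), deriv_const_sub]
  have hq₂h : DifferentiableAt ℝ (fun t => deriv q (c - h t)) s :=
    (hq₂ _).comp s ((hh₁ s).const_sub c)
  rw [chain hq₁, deriv_fun_mul hq₂h (hh₂ s).fun_neg,
    congrFun (chain hq₂) s, deriv.fun_neg]
  ring

lemma deriv_deriv_finset_sum {ι : Type*} (s : Finset ι) {g : ι → ℝ → ℝ}
    (hg : ∀ i ∈ s, ContDiff ℝ 2 (g i)) (t : ℝ) :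
    deriv (deriv fun y => ∑ i ∈ s, g i y) t = ∑ i ∈ s, deriv (deriv (g i)) t := by
  have hderiv : deriv (fun y => ∑ i ∈ s, g i y) = fun y => ∑ i ∈ s, deriv (g i) y := by
    funext y
    exact deriv_fun_sum fun i hi => (hg i hi).differentiable two_ne_zero y
  rw [hderiv]
  exact deriv_fun_sum fun i hi => (hg i hi).differentiable_deriv_of_two t

lemma deriv_deriv_log_finset_prod {ι : Type*} (s : Finset ι) {g : ι → ℝ → ℝ}
    (hg : ∀ i ∈ s, ContDiff ℝ 2 (g i)) (hg₀ : ∀ i ∈ s, ∀ y, g i y ≠ 0) (t : ℝ) :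
    deriv (deriv fun y => log (∏ i ∈ s, g i y)) t
      = ∑ i ∈ s, deriv (deriv fun y => log (g i y)) t := by
  have hlog : (fun y => log (∏ i ∈ s, g i y)) = fun y => ∑ i ∈ s, log (g i y) := by
    funext y
    exact log_prod fun i hi => hg₀ i hi y
  rw [hlog]
  exact deriv_deriv_finset_sum s (fun i hi => (hg i hi).log (hg₀ i hi)) t

end SecondDerivative

theorem anm_sink_hessian_diagonal_general
    (D : ℕ)
    (p : Fin D → ℝ → ℝ)
    (hp_pos : ∀ i ε, 0 < p i ε)
    (hp_smooth : ∀ i, ContDiff ℝ 2 (p i))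
    (f : Fin D → (Fin D → ℝ) → ℝ)
    (hf_smooth : ∀ i, ContDiff ℝ 2 (f i))
    (P : (Fin D → ℝ) → ℝ)
    (hP : ∀ x, P x = ∏ i, p i (x i - f i x))
    (S : Fin D → (Fin D → ℝ) → ℝ)
    (hS : ∀ j x, S j x = deriv (fun t => Real.log (P (Function.update x j t))) (x j))
    (Dg : Fin D → (Fin D → ℝ) → ℝ)
    (hD : ∀ j x, Dg j x = deriv (fun t => S j (Function.update x j t)) (x j))
    (L : Finset (Fin D))
    (PmL : (Fin D → ℝ) → ℝ)
    (hPmL : ∀ x, PmL x = ∏ i ∈ Lᶜ, p i (x i - f i x))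
    (j : Fin D) (hjL : j ∉ L)
    (x : Fin D → ℝ) :
    deriv (deriv (fun t => Real.log (PmL (Function.update x j t)))) (x j)
      = Dg j x + ∑ l ∈ L,
          (deriv (deriv (fun t => f l (Function.update x j t))) (x j)
              * deriv (fun e => Real.log (p l e)) (x l - f l x)
            - (deriv (fun t => f l (Function.update x j t)) (x j)) ^ 2
              * deriv (deriv (fun e => Real.log (p l e))) (x l - f l x)) := by
  have hline := contDiff_update (𝕜 := ℝ) 2 x j
  have hterm : ∀ i, ContDiff ℝ 2 fun t => p i (update x j t i - f i (update x j t)) := fun i =>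
    (hp_smooth i).comp (((contDiff_apply ℝ ℝ i).comp hline).sub ((hf_smooth i).comp hline))
  have hterm₀ : ∀ i t, p i (update x j t i - f i (update x j t)) ≠ 0 := fun i t => (hp_pos i _).ne'
  have hDg : Dg j x = ∑ i, deriv (deriv fun t =>
      log (p i (update x j t i - f i (update x j t)))) (x j) := by
    simp only [hD, hS, update_idem, update_self, hP]
    exact deriv_deriv_log_finset_prod _ (fun i _ => hterm i) (fun i _ => hterm₀ i) _
  have hPmL' : deriv (deriv fun t => log (PmL (update x j t))) (x j) = ∑ i ∈ Lᶜ, deriv (deriv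
      fun t => log (p i (update x j t i - f i (update x j t)))) (x j) := by
    simp only [hPmL]
    exact deriv_deriv_log_finset_prod _ (fun i _ => hterm i) (fun i _ => hterm₀ i) _
  have hL_terms : ∀ l ∈ L, deriv (deriv fun t =>
      log (p l (update x j t l - f l (update x j t)))) (x j) = -(
      deriv (deriv fun t => f l (update x j t)) (x j) * deriv (fun e => log (p l e)) (x l - f l x)
        - deriv (fun t => f l (update x j t)) (x j) ^ 2
          * deriv (deriv fun e => log (p l e)) (x l - f l x)) := by
    intro l hl
    simp only [update_of_ne (ne_of_mem_of_not_mem hl hjL)]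
    have hchain := deriv_deriv_comp_const_sub (q := fun e => log (p l e))
      (h := fun t => f l (update x j t))
      ((hp_smooth l).log fun e => (hp_pos l e).ne') ((hf_smooth l).comp hline) (x l) (x j)
    rw [hchain, update_eq_self]
    ring
  rw [hPmL', hDg, ← sum_compl_add_sum L, sum_congr rfl hL_terms, sum_neg_distrib]
  ring

/-- ANM Hessian diagonal of the marginalized log-density over a sink set `L`:
    for `j ∉ L`, `∂²_{x_j x_j} log P_{-L}(x) = 𝒟_j(x) + ∑_{l ∈ L}
    [∂²_{x_j x_j} f_l(x) · (log p_l)'(x_l − f_l(x))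
      − (∂_{x_j} f_l(x))² · (log p_l)''(x_l − f_l(x))]`. -/
theorem anm_sink_hessian_diagonal
    (D : ℕ) (Pa : Fin D → Set (Fin D))
    (hPa : ∀ i, i ∉ Pa i)
    (p : Fin D → ℝ → ℝ)
    (hp_pos : ∀ i ε, 0 < p i ε)
    (hp_smooth : ∀ i, ContDiff ℝ 2 (p i))
    (f : Fin D → (Fin D → ℝ) → ℝ)
    (hf_smooth : ∀ i, ContDiff ℝ 2 (f i))
    (hf_dep : ∀ i j, j ∉ Pa i → ∀ (x : Fin D → ℝ) (t : ℝ),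
      f i (Function.update x j t) = f i x)
    (P : (Fin D → ℝ) → ℝ)
    (hP : ∀ x, P x = ∏ i, p i (x i - f i x))
    (S : Fin D → (Fin D → ℝ) → ℝ)
    (hS : ∀ j x, S j x = deriv (fun t => Real.log (P (Function.update x j t))) (x j))
    (Dg : Fin D → (Fin D → ℝ) → ℝ)
    (hD : ∀ j x, Dg j x = deriv (fun t => S j (Function.update x j t)) (x j))
    (L : Finset (Fin D))
    (hSink : ∀ j ∈ L, ∀ i, i ∉ L → j ∉ Pa i)
    (PmL : (Fin D → ℝ) → ℝ)
    (hPmL : ∀ x, PmL x = ∏ i ∈ Lᶜ, p i (x i - f i x))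
    (j : Fin D) (hjL : j ∉ L)
    (x : Fin D → ℝ) :
    deriv (deriv (fun t => Real.log (PmL (Function.update x j t)))) (x j)
      = Dg j x + ∑ l ∈ L,
          (deriv (deriv (fun t => f l (Function.update x j t))) (x j)
              * deriv (fun e => Real.log (p l e)) (x l - f l x)
            - (deriv (fun t => f l (Function.update x j t)) (x j)) ^ 2
              * deriv (deriv (fun e => Real.log (p l e))) (x l - f l x)) :=
  anm_sink_hessian_diagonal_general D p hp_pos hp_smooth f hf_smooth P hP S hS Dg hD L PmL hPmL j
    hjL x
end

section
/- Under the ANM setup, suppose l ∈ V is a leaf and the noise density of node l is Gaussian: p_l(ε) = (2πσ²)^{−1/2} exp(−ε²/(2σ²)) for some σ > 0. Then the Hessian diagonal at node l is constant: 𝒟_l(x) = ∂²_{x_l x_l} log P(x) = −1/σ² for every x ∈ ℝ^D. Consequently, for every probability measure μ on ℝ^D, the variance Var_{x ∼ μ}[𝒟_l(x)] = 0. -/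
open MeasureTheory ProbabilityTheory Real Finset Function

/-!
Since no mechanism has the leaf `l` among its parents, moving `x` along the `l`-th coordinate
changes only the factor `p_l(x_l - f_l(x))` of `P`, and leaves `f_l(x)` itself unchanged. So along
that line `log P` is `log p_l(t - f_l(x))` plus a constant, and for the Gaussian density this is a
quadratic in `t` with leading coefficient `-1/(2σ²)`.
-/

theorem variance_fun_const {Ω : Type*} [MeasurableSpace Ω] (μ : Measure Ω)
    [IsProbabilityMeasure μ] (c : ℝ) : variance (fun _ : Ω => c) μ = 0 := by
  simp [variance, evariance]

theorem hasDerivAt_neg_sub_div (c s t : ℝ) :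
    HasDerivAt (fun t : ℝ => -(t - c) / s) (-1 / s) t :=
  ((hasDerivAt_id t).sub_const c).neg.div_const s

theorem hasDerivAt_log_mul_exp_neg_sq_div {A : ℝ} (hA : A ≠ 0) (s ε : ℝ) :
    HasDerivAt (fun ε => log (A * exp (-ε ^ 2 / (2 * s)))) (-ε / s) ε := by
  have hlog : (fun ε => log (A * exp (-ε ^ 2 / (2 * s)))) = fun ε => log A + -ε ^ 2 / (2 * s) := by
    funext ε
    rw [log_mul hA (exp_pos _).ne', log_exp]
  rw [hlog]
  exact ((hasDerivAt_pow 2 ε).neg.div_const (2 * s)).const_add (log A) |>.congr_deriv (by ring)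

section Leaf

variable {ι : Type*} [Fintype ι] [DecidableEq ι]

theorem prod_update_eq_mul_prod_erase (p : ι → ℝ → ℝ) (f : ι → (ι → ℝ) → ℝ) {l : ι}
    (hf : ∀ i x t, f i (update x l t) = f i x) (x : ι → ℝ) (t : ℝ) :
    ∏ i, p i (update x l t i - f i (update x l t)) =
      p l (t - f l x) * ∏ i ∈ univ.erase l, p i (x i - f i x) := by
  rw [← mul_prod_erase univ _ (mem_univ l), update_self, hf]
  congr 1
  refine prod_congr rfl fun i hi => ?_
  rw [update_of_ne (ne_of_mem_erase hi), hf]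

theorem hasDerivAt_log_prod_update_of_gaussian (p : ι → ℝ → ℝ) (hp : ∀ i ε, p i ε ≠ 0)
    (f : ι → (ι → ℝ) → ℝ) {l : ι} (hf : ∀ i x t, f i (update x l t) = f i x)
    {A s : ℝ} (hgauss : ∀ ε, p l ε = A * exp (-ε ^ 2 / (2 * s))) (x : ι → ℝ) (t : ℝ) :
    HasDerivAt (fun t => log (∏ i, p i (update x l t i - f i (update x l t))))
      (-(t - f l x) / s) t := by
  have hA : A ≠ 0 := by
    have := hp l 0
    rw [hgauss] at this
    exact left_ne_zero_of_mul this
  have hrest : ∏ i ∈ univ.erase l, p i (x i - f i x) ≠ 0 :=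
    prod_ne_zero_iff.mpr fun i _ => hp i _
  simp_rw [prod_update_eq_mul_prod_erase p f hf, log_mul (hp l _) hrest]
  have hfactor : HasDerivAt (fun t => log (p l (t - f l x))) (-(t - f l x) / s) t := by
    simp_rw [hgauss]
    exact (hasDerivAt_log_mul_exp_neg_sq_div hA s (t - f l x)).comp t
      ((hasDerivAt_id t).sub_const (f l x)) |>.congr_deriv (mul_one _)
  exact hfactor.add_const _

end Leaf

theorem anm_gaussian_leaf_constant_hessian_general
    (D : ℕ) (Pa : Fin D → Set (Fin D))
    (p : Fin D → ℝ → ℝ)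
    (hp_pos : ∀ i ε, 0 < p i ε)
    (f : Fin D → (Fin D → ℝ) → ℝ)
    (hf_dep : ∀ i j, j ∉ Pa i → ∀ (x : Fin D → ℝ) (t : ℝ),
      f i (Function.update x j t) = f i x)
    (P : (Fin D → ℝ) → ℝ)
    (hP : ∀ x, P x = ∏ i, p i (x i - f i x))
    (S : Fin D → (Fin D → ℝ) → ℝ)
    (hS : ∀ j x, S j x = deriv (fun t => Real.log (P (Function.update x j t))) (x j))
    (Dg : Fin D → (Fin D → ℝ) → ℝ)
    (hD : ∀ j x, Dg j x = deriv (fun t => S j (Function.update x j t)) (x j))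
    (l : Fin D) (hleaf : ∀ i, l ∉ Pa i)
    (σ : ℝ)
    (hgauss : ∀ ε : ℝ, p l ε
      = (2 * Real.pi * σ ^ 2) ^ (-(1 / 2) : ℝ) * Real.exp (-ε ^ 2 / (2 * σ ^ 2))) :
    (∀ x : Fin D → ℝ, Dg l x = -1 / σ ^ 2)
    ∧ (∀ x : Fin D → ℝ,
        deriv (deriv (fun t => Real.log (P (Function.update x l t)))) (x l) = -1 / σ ^ 2)
    ∧ ∀ μ : Measure (Fin D → ℝ), IsProbabilityMeasure μ →
        variance (Dg l) μ = 0 := by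
  have hlogP : ∀ x t, HasDerivAt (fun t => log (P (update x l t))) (-(t - f l x) / σ ^ 2) t := by
    simpa only [hP] using hasDerivAt_log_prod_update_of_gaussian p (fun i ε => (hp_pos i ε).ne') f
      (fun i => hf_dep i l (hleaf i)) hgauss
  have hscore : ∀ x t, S l (update x l t) = -(t - f l x) / σ ^ 2 := fun x t => by
    simp only [hS, update_idem, update_self, (hlogP x t).deriv]
  have hhess : ∀ x, Dg l x = -1 / σ ^ 2 := fun x => by
    rw [hD, funext (hscore x), (hasDerivAt_neg_sub_div _ _ _).deriv]
  refine ⟨hhess, fun x => ?_, fun μ _ => ?_⟩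
  · rw [funext fun t => (hlogP x t).deriv, (hasDerivAt_neg_sub_div _ _ _).deriv]
  · rw [funext hhess, variance_fun_const]

/-- ANM with Gaussian leaf noise: if `l` is a leaf and `p_l` is the
    `N(0, σ²)` density, then `𝒟_l(x) = ∂²_{x_l x_l} log P(x) = −1/σ²` for all `x`;
    consequently `Var_{x∼μ}[𝒟_l(x)] = 0` for every probability measure `μ`. -/
theorem anm_gaussian_leaf_constant_hessian
    (D : ℕ) (Pa : Fin D → Set (Fin D))
    (hPa : ∀ i, i ∉ Pa i)
    (p : Fin D → ℝ → ℝ)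
    (hp_pos : ∀ i ε, 0 < p i ε)
    (hp_smooth : ∀ i, ContDiff ℝ 2 (p i))
    (f : Fin D → (Fin D → ℝ) → ℝ)
    (hf_smooth : ∀ i, ContDiff ℝ 2 (f i))
    (hf_dep : ∀ i j, j ∉ Pa i → ∀ (x : Fin D → ℝ) (t : ℝ),
      f i (Function.update x j t) = f i x)
    (P : (Fin D → ℝ) → ℝ)
    (hP : ∀ x, P x = ∏ i, p i (x i - f i x))
    (S : Fin D → (Fin D → ℝ) → ℝ)
    (hS : ∀ j x, S j x = deriv (fun t => Real.log (P (Function.update x j t))) (x j))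
    (Dg : Fin D → (Fin D → ℝ) → ℝ)
    (hD : ∀ j x, Dg j x = deriv (fun t => S j (Function.update x j t)) (x j))
    (l : Fin D) (hleaf : ∀ i, l ∉ Pa i)
    (σ : ℝ) (hσ : 0 < σ)
    (hgauss : ∀ ε : ℝ, p l ε
      = (2 * Real.pi * σ ^ 2) ^ (-(1 / 2) : ℝ) * Real.exp (-ε ^ 2 / (2 * σ ^ 2))) :
    (∀ x : Fin D → ℝ, Dg l x = -1 / σ ^ 2)
    ∧ (∀ x : Fin D → ℝ,
        deriv (deriv (fun t => Real.log (P (Function.update x l t)))) (x l) = -1 / σ ^ 2)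
    ∧ ∀ μ : Measure (Fin D → ℝ), IsProbabilityMeasure μ →
        variance (Dg l) μ = 0 :=
  anm_gaussian_leaf_constant_hessian_general D Pa p hp_pos f hf_dep P hP S hS Dg hD l hleaf σ hgauss
end

section
/- Under the ANM setup, assume ∫_ℝ p_i(ε) dε = 1 for every i ∈ V and that the graph admits a topological order. If l ∈ V is a leaf, then the noise at node l has distribution p_l under the joint density: for every bounded continuous function g : ℝ → ℝ, ∫_{ℝ^D} g(x_l − f_l(x)) P(x) dx = ∫_ℝ g(ε) p_l(ε) dε; i.e., the pushforward of the probability measure with density P under the map x ↦ x_l − f_l(x) has density p_l. -/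
/-!
Listing the nodes in a topological order, the noise map `x ↦ (xᵢ - fᵢ x)ᵢ` translates each
coordinate by an amount depending only on earlier coordinates. Such a triangular shear preserves
Lebesgue measure (inductively, it is a skew product of a shear in one dimension less with
translations of the last coordinate). Changing variables to the noises `ε = x - f x` turns the
joint density into the product density `∏ pᵢ(εᵢ)`, and Fubini integrates out every noise but `εₗ`.
-/

open MeasureTheory

def noiseMap {ι : Type*} (f : ι → (ι → ℝ) → ℝ) (x : ι → ℝ) : ι → ℝ := fun i => x i - f i x

def snocMeasurableEquiv (n : ℕ) : (Fin n → ℝ) × ℝ ≃ᵐ (Fin (n + 1) → ℝ) :=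
  MeasurableEquiv.prodComm.trans (MeasurableEquiv.piFinSuccAbove (fun _ => ℝ) (Fin.last n)).symm

theorem snocMeasurableEquiv_apply {n : ℕ} (p : (Fin n → ℝ) × ℝ) :
    snocMeasurableEquiv n p = Fin.snoc p.1 p.2 :=
  Fin.insertNth_last' _ _

theorem measurePreserving_snocMeasurableEquiv (n : ℕ) :
    MeasurePreserving (snocMeasurableEquiv n) := by
  rw [Measure.volume_eq_prod]
  exact (volume_preserving_piFinSuccAbove (fun _ : Fin (n + 1) => ℝ) (Fin.last n)).symm.comp
    Measure.measurePreserving_swap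

theorem measurable_snoc_const (n : ℕ) (t : ℝ) :
    Measurable fun z : Fin n → ℝ => (Fin.snoc z t : Fin (n + 1) → ℝ) := by
  have h := (snocMeasurableEquiv n).measurable.comp
    (measurable_id.prodMk (measurable_const (a := t)))
  simpa only [Function.comp_def, snocMeasurableEquiv_apply, id_eq] using h

theorem noiseMap_snoc {n : ℕ} {f : Fin (n + 1) → (Fin (n + 1) → ℝ) → ℝ}
    (hf : ∀ i x t, f i (Function.update x (Fin.last n) t) = f i x) (z : Fin n → ℝ) (t : ℝ) :
    noiseMap f (Fin.snoc z t) =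
      Fin.snoc (noiseMap (fun i y => f i.castSucc (Fin.snoc y 0)) z)
        (t - f (Fin.last n) (Fin.snoc z 0)) := by
  have hf' : ∀ i, f i (Fin.snoc z t) = f i (Fin.snoc z 0) := fun i => by
    rw [← Fin.update_snoc_last (x := 0), hf]
  funext i
  induction i using Fin.lastCases with
  | last => simp [noiseMap, hf']
  | cast i => simp [noiseMap, hf']

theorem measurePreserving_noiseMap_fin {n : ℕ} {f : Fin n → (Fin n → ℝ) → ℝ}
    (hf : ∀ i, Measurable (f i))
    (hdep : ∀ i j, ¬ j < i → ∀ x t, f i (Function.update x j t) = f i x) :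
    MeasurePreserving (noiseMap f) := by
  induction n with
  | zero =>
    rw [show noiseMap f = id from funext fun _ => Subsingleton.elim _ _]
    exact .id volume
  | succ n ih =>
    set f' : Fin n → (Fin n → ℝ) → ℝ := fun i y => f i.castSucc (Fin.snoc y 0)
    set h : (Fin n → ℝ) → ℝ := fun z => f (Fin.last n) (Fin.snoc z 0)
    have hf' : MeasurePreserving (noiseMap f') := by
      refine ih (fun i => (hf _).comp (measurable_snoc_const n 0)) fun i j hji y t => ?_
      simp only [f', Fin.snoc_update]
      exact hdep _ _ (by simpa using hji) _ t
    set K : (Fin n → ℝ) × ℝ → (Fin n → ℝ) × ℝ := fun p => (noiseMap f' p.1, p.2 - h p.1)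
    have hK : MeasurePreserving K (volume.prod volume) (volume.prod volume) :=
      hf'.skew_product (g := fun z t => t - h z)
        (measurable_snd.sub (((hf _).comp (measurable_snoc_const n 0)).comp measurable_fst))
        (ae_of_all _ fun z => (measurePreserving_sub_right volume (h z)).map_eq)
    have hconj : noiseMap f = snocMeasurableEquiv n ∘ K ∘ (snocMeasurableEquiv n).symm := by
      funext x
      obtain ⟨p, rfl⟩ := (snocMeasurableEquiv n).surjective x
      simp only [Function.comp_apply, MeasurableEquiv.symm_apply_apply]
      simp only [K, snocMeasurableEquiv_apply]
      exact noiseMap_snoc (fun i => hdep i _ (Fin.le_last i).not_gt) p.1 p.2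
    have hS := measurePreserving_snocMeasurableEquiv n
    rw [Measure.volume_eq_prod] at hS
    rw [hconj]
    exact hS.comp (hK.comp hS.symm)

theorem measurePreserving_noiseMap {ι : Type*} [Fintype ι] [DecidableEq ι] {n : ℕ}
    (σ : ι ≃ Fin n) {f : ι → (ι → ℝ) → ℝ} (hf : ∀ i, Measurable (f i))
    (hdep : ∀ i j, ¬ σ j < σ i → ∀ x t, f i (Function.update x j t) = f i x) :
    MeasurePreserving (noiseMap f) := by
  set T := MeasurableEquiv.arrowCongr' σ (MeasurableEquiv.refl ℝ)
  have hT : MeasurePreserving T := volume_preserving_arrowCongr' _ _ (.id volume)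
  have hT_apply : ∀ x k, T x k = x (σ.symm k) := fun _ _ => rfl
  have hT_symm_apply : ∀ y i, T.symm y i = y (σ i) := fun _ _ => rfl
  set f' : Fin n → (Fin n → ℝ) → ℝ := fun k y => f (σ.symm k) (T.symm y)
  have hf' : MeasurePreserving (noiseMap f') := by
    refine measurePreserving_noiseMap_fin (fun k => (hf _).comp T.symm.measurable)
      fun k j hjk y t => ?_
    have : T.symm (Function.update y j t) = Function.update (T.symm y) (σ.symm j) t := by
      funext i
      simp only [hT_symm_apply, Function.update_apply, σ.eq_symm_apply]
    simp only [f', this]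
    exact hdep (σ.symm k) (σ.symm j) (by simpa using hjk) _ t
  have hconj : noiseMap f = T.symm ∘ noiseMap f' ∘ T := by
    funext x i
    simp [noiseMap, f', hT_symm_apply, hT_apply]
  rw [hconj]
  exact hT.symm.comp (hf'.comp hT)

theorem integral_mul_prod_eq_of_integral_eq_one {ι : Type*} [Fintype ι] [DecidableEq ι]
    {p : ι → ℝ → ℝ} {l : ι} (hp : ∀ i ≠ l, ∫ ε, p i ε = 1) (g : ℝ → ℝ) :
    ∫ y : ι → ℝ, g (y l) * ∏ i, p i (y i) = ∫ ε, g ε * p l ε := by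
  set q := Function.update p l fun ε => g ε * p l ε
  have hq : ∀ y : ι → ℝ, g (y l) * ∏ i, p i (y i) = ∏ i, q i (y i) := fun y => by
    rw [← Finset.mul_prod_erase _ _ (Finset.mem_univ l),
      ← Finset.mul_prod_erase _ _ (Finset.mem_univ l), ← mul_assoc]
    congr 1
    · simp [q]
    · exact Finset.prod_congr rfl fun i hi => by simp [q, Finset.ne_of_mem_erase hi]
  calc ∫ y : ι → ℝ, g (y l) * ∏ i, p i (y i)
      = ∏ i, ∫ ε, q i ε := by simp_rw [hq]; exact integral_fintype_prod_volume_eq_prod q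
    _ = ∫ ε, q l ε := Finset.prod_eq_single l (fun i _ hi => by simp [q, hi, hp i hi]) (by simp)
    _ = ∫ ε, g ε * p l ε := by simp [q]

theorem anm_leaf_noise_distribution_general
    (D : ℕ) (Pa : Fin D → Set (Fin D))
    (p : Fin D → ℝ → ℝ)
    (hp_smooth : ∀ i, ContDiff ℝ 2 (p i))
    (f : Fin D → (Fin D → ℝ) → ℝ)
    (hf_smooth : ∀ i, ContDiff ℝ 2 (f i))
    (hf_dep : ∀ i j, j ∉ Pa i → ∀ (x : Fin D → ℝ) (t : ℝ),
      f i (Function.update x j t) = f i x)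
    (P : (Fin D → ℝ) → ℝ)
    (hP : ∀ x, P x = ∏ i, p i (x i - f i x))
    (hp_int : ∀ i, ∫ ε : ℝ, p i ε = 1)
    (htopo : ∃ ord : Equiv.Perm (Fin D), ∀ i j, j ∈ Pa i → ord j < ord i)
    (l : Fin D)
    (g : ℝ → ℝ) (hg_cont : Continuous g) :
    ∫ x : Fin D → ℝ, g (x l - f l x) * P x = ∫ ε : ℝ, g ε * p l ε := by
  obtain ⟨ord, hord⟩ := htopo
  have hnoise : MeasurePreserving (noiseMap f) :=
    measurePreserving_noiseMap ord (fun i => (hf_smooth i).continuous.measurable)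
      fun i j hji => hf_dep i j fun hj => hji (hord i j hj)
  have hp_cont : ∀ i, Continuous (p i) := fun i => (hp_smooth i).continuous
  set F : (Fin D → ℝ) → ℝ := fun y => g (y l) * ∏ i, p i (y i)
  have hF : Continuous F := by fun_prop
  calc ∫ x : Fin D → ℝ, g (x l - f l x) * P x
      = ∫ x, F (noiseMap f x) := by simp only [F, hP, noiseMap]
    _ = ∫ y, F y := by
        rw [← integral_map hnoise.aemeasurable (hnoise.map_eq ▸ hF.aestronglyMeasurable),
          hnoise.map_eq]
    _ = ∫ ε, g ε * p l ε := integral_mul_prod_eq_of_integral_eq_one (fun i _ => hp_int i) g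

/-- ANM leaf-noise distribution: if `l` is a leaf (with normalized noise
    densities and a topological order), then for every bounded continuous
    `g : ℝ → ℝ`, `∫ g(x_l − f_l(x)) P(x) dx = ∫ g(ε) p_l(ε) dε`. -/
theorem anm_leaf_noise_distribution
    (D : ℕ) (Pa : Fin D → Set (Fin D))
    (hPa : ∀ i, i ∉ Pa i)
    (p : Fin D → ℝ → ℝ)
    (hp_pos : ∀ i ε, 0 < p i ε)
    (hp_smooth : ∀ i, ContDiff ℝ 2 (p i))
    (f : Fin D → (Fin D → ℝ) → ℝ)
    (hf_smooth : ∀ i, ContDiff ℝ 2 (f i))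
    (hf_dep : ∀ i j, j ∉ Pa i → ∀ (x : Fin D → ℝ) (t : ℝ),
      f i (Function.update x j t) = f i x)
    (P : (Fin D → ℝ) → ℝ)
    (hP : ∀ x, P x = ∏ i, p i (x i - f i x))
    (hp_int : ∀ i, ∫ ε : ℝ, p i ε = 1)
    (htopo : ∃ ord : Equiv.Perm (Fin D), ∀ i j, j ∈ Pa i → ord j < ord i)
    (l : Fin D) (hleaf : ∀ i, l ∉ Pa i)
    (g : ℝ → ℝ) (hg_cont : Continuous g) (hg_bdd : ∃ C, ∀ y : ℝ, |g y| ≤ C) :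
    ∫ x : Fin D → ℝ, g (x l - f l x) * P x = ∫ ε : ℝ, g ε * p l ε :=
  anm_leaf_noise_distribution_general D Pa p hp_smooth f hf_smooth hf_dep P hP hp_int htopo l g
    hg_cont
end

section
/- Under the ANM setup, if l ∈ V is a leaf, then the Hessian diagonal at node l equals the curvature of the noise log-density evaluated at the residual: 𝒟_l(x) = (log p_l)''(x_l − f_l(x)) for every x ∈ ℝ^D. Moreover, if additionally ∫_ℝ p_i(ε) dε = 1 for every i ∈ V, the graph admits a topological order, and ε ↦ (log p_l)''(ε) · p_l(ε) is integrable on ℝ, then the expectation of the Hessian diagonal under the model satisfies ∫_{ℝ^D} 𝒟_l(x) P(x) dx = ∫_ℝ (log p_l)''(ε) p_l(ε) dε. -/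
/-!
At a leaf `l` no `f_i` depends on `x_l`, so `x_l` enters `log P` only through the summand
`log p_l (x_l - f_l x)`, and two derivatives in `x_l` give `(log p_l)''` at the residual.

For the expectation, the residual map `x ↦ ε = (x_i - f_i x)_i` pushes the law with density `P`
forward to the product of the noise laws `p_i dε_i`. To see this, integrate the coordinates out
in reverse topological order: when `x_i` is integrated, every node depending on it has already
been integrated, so `x_i` occurs only in the factor `p_i (x_i - f_i x)`, a translate of `p_i`.
Thus `ε_l` has density `p_l`, and the expectation of `(log p_l)''(ε_l)` is a one-dimensional
integral.
-/

open MeasureTheory Real Finset Function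
open scoped ENNReal

theorem integral_mul_eq_integral_withDensity_ofReal {X : Type*} [MeasurableSpace X]
    {μ : Measure X} {ρ : X → ℝ} (hρ : Measurable ρ) (hρ_nonneg : ∀ x, 0 ≤ ρ x) (g : X → ℝ) :
    ∫ x, g x * ρ x ∂μ = ∫ x, g x ∂μ.withDensity fun x => ENNReal.ofReal (ρ x) := by
  rw [integral_withDensity_eq_integral_toReal_smul hρ.ennreal_ofReal
    (ae_of_all _ fun _ => ENNReal.ofReal_lt_top)]
  simp only [ENNReal.toReal_ofReal (hρ_nonneg _), smul_eq_mul, mul_comm]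

theorem deriv_update_eq_of_eq_comp_sub_add {ι : Type*} [DecidableEq ι] {F c d : (ι → ℝ) → ℝ}
    {g : ℝ → ℝ} (j : ι) (hc : ∀ x t, c (update x j t) = c x) (hd : ∀ x t, d (update x j t) = d x)
    (hF : ∀ x, F x = g (x j - c x) + d x) (x : ι → ℝ) :
    deriv (fun t => F (update x j t)) (x j) = deriv g (x j - c x) := by
  simp_rw [hF, update_self, hc, hd]
  rw [deriv_add_const, deriv_comp_sub_const]

namespace ANM

variable {ι : Type*} {Pa : ι → Set ι} {f : ι → (ι → ℝ) → ℝ}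

def noise (f : ι → (ι → ℝ) → ℝ) (x : ι → ℝ) : ι → ℝ := fun i => x i - f i x

theorem measurable_noise (hf : ∀ i, Measurable (f i)) : Measurable (noise f) :=
  measurable_pi_lambda _ fun i => (measurable_pi_apply i).sub (hf i)

variable [DecidableEq ι]

theorem noise_update_of_ne {i k : ι} (hik : i ≠ k)
    (hf : ∀ (x : ι → ℝ) (t : ℝ), f i (update x k t) = f i x) (x : ι → ℝ) (t : ℝ) :
    noise f (update x k t) i = noise f x i := by
  simp only [noise, update_of_ne hik, hf]

theorem noise_update_self {i : ι} (hf : ∀ (x : ι → ℝ) (t : ℝ), f i (update x i t) = f i x)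
    (x : ι → ℝ) (t : ℝ) :
    noise f (update x i t) i = t - f i x := by
  simp only [noise, update_self, hf]

variable [Fintype ι] {α : Type*} [LinearOrder α]

theorem lmarginal_prod_noise (hPa : ∀ i, i ∉ Pa i) (hf_meas : ∀ i, Measurable (f i))
    (hf_dep : ∀ i j, j ∉ Pa i → ∀ (x : ι → ℝ) (t : ℝ), f i (update x j t) = f i x)
    (rank : ι → α) (hrank : ∀ i j, j ∈ Pa i → rank j < rank i)
    {ρ : ι → ℝ → ℝ≥0∞} (hρ : ∀ i, Measurable (ρ i))
    (s : Finset ι) (hs : ∀ j ∈ s, ∀ k, j ∈ Pa k → k ∈ s) (x : ι → ℝ) :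
    (∫⋯∫⁻_s, fun y => ∏ i, ρ i (noise f y i)) x
      = (∏ i ∈ s, ∫⁻ ε, ρ i ε) * ∏ i ∈ sᶜ, ρ i (noise f x i) := by
  induction s using Finset.strongInduction generalizing x with
  | _ s ih =>
  rcases s.eq_empty_or_nonempty with rfl | hne
  · simp
  obtain ⟨i, hi, hmin⟩ := s.exists_min_image rank hne
  have hs' : ∀ j ∈ s.erase i, ∀ k, j ∈ Pa k → k ∈ s.erase i := by
    intro j hj k hjk
    refine mem_erase.mpr ⟨?_, hs j (mem_of_mem_erase hj) k hjk⟩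
    rintro rfl
    exact (hrank k j hjk).not_ge (hmin j (mem_of_mem_erase hj))
  have hmeas : Measurable fun y => ∏ i, ρ i (noise f y i) :=
    Finset.measurable_prod _ fun i _ =>
      (hρ i).comp ((measurable_pi_apply i).comp (measurable_noise hf_meas))
  have hinner : ∀ t : ℝ, ∏ k ∈ (s.erase i)ᶜ, ρ k (noise f (update x i t) k)
      = ρ i (t - f i x) * ∏ k ∈ sᶜ, ρ k (noise f x k) := by
    intro t
    rw [compl_erase, prod_insert (fun h => mem_compl.mp h hi),
      noise_update_self (hf_dep i i (hPa i))]
    congr 1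
    refine prod_congr rfl fun k hk => congrArg (ρ k) (noise_update_of_ne ?_ ?_ x t)
    · rintro rfl; exact mem_compl.mp hk hi
    · exact hf_dep k i fun hik => mem_compl.mp hk (hs i hi k hik)
  simp_rw [lmarginal_erase _ hmeas hi x, ih _ (erase_ssubset hi) hs', hinner]
  have hshift : Measurable fun t : ℝ => ρ i (t - f i x) := by fun_prop
  rw [lintegral_const_mul _ (hshift.mul_const _), lintegral_mul_const _ hshift,
    lintegral_sub_right_eq_self (ρ i) (f i x), ← mul_prod_erase s _ hi]
  ring

theorem lintegral_prod_noise (hPa : ∀ i, i ∉ Pa i) (hf_meas : ∀ i, Measurable (f i))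
    (hf_dep : ∀ i j, j ∉ Pa i → ∀ (x : ι → ℝ) (t : ℝ), f i (update x j t) = f i x)
    (rank : ι → α) (hrank : ∀ i j, j ∈ Pa i → rank j < rank i)
    {ρ : ι → ℝ → ℝ≥0∞} (hρ : ∀ i, Measurable (ρ i)) :
    ∫⁻ x, ∏ i, ρ i (noise f x i) = ∏ i, ∫⁻ ε, ρ i ε := by
  rw [volume_pi, lintegral_eq_lmarginal_univ 0,
    lmarginal_prod_noise hPa hf_meas hf_dep rank hrank hρ univ (fun _ _ k _ => mem_univ k)]
  simp

theorem map_noise_withDensity (hPa : ∀ i, i ∉ Pa i) (hf_meas : ∀ i, Measurable (f i))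
    (hf_dep : ∀ i j, j ∉ Pa i → ∀ (x : ι → ℝ) (t : ℝ), f i (update x j t) = f i x)
    (rank : ι → α) (hrank : ∀ i j, j ∈ Pa i → rank j < rank i)
    {p : ι → ℝ → ℝ} (hp : ∀ i, Measurable (p i)) :
    (volume.withDensity fun x => ∏ i, ENNReal.ofReal (p i (noise f x i))).map (noise f)
      = Measure.pi fun i => volume.withDensity fun ε => ENNReal.ofReal (p i ε) := by
  refine (Measure.pi_eq fun s hs => ?_).symm
  have hmeas := measurable_noise hf_meas
  have hind : (noise f ⁻¹' Set.univ.pi s).indicator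
        (fun x => ∏ i, ENNReal.ofReal (p i (noise f x i)))
      = fun x => ∏ i, (s i).indicator (fun ε => ENNReal.ofReal (p i ε)) (noise f x i) := by
    ext x
    classical
    simp only [Set.indicator_apply, Set.mem_preimage, Set.mem_univ_pi, prod_ite_zero, mem_univ,
      true_implies]
  rw [Measure.map_apply hmeas (.univ_pi hs), withDensity_apply _ (hmeas (.univ_pi hs)),
    ← lintegral_indicator (hmeas (.univ_pi hs)), hind,
    lintegral_prod_noise hPa hf_meas hf_dep rank hrank
      fun i => (hp i).ennreal_ofReal.indicator (hs i)]
  exact prod_congr rfl fun i _ => (lintegral_indicator (hs i) _).trans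
    (withDensity_apply _ (hs i)).symm

theorem map_noise_apply_withDensity (hPa : ∀ i, i ∉ Pa i) (hf_meas : ∀ i, Measurable (f i))
    (hf_dep : ∀ i j, j ∉ Pa i → ∀ (x : ι → ℝ) (t : ℝ), f i (update x j t) = f i x)
    (rank : ι → α) (hrank : ∀ i j, j ∈ Pa i → rank j < rank i)
    {p : ι → ℝ → ℝ} (hp : ∀ i, Measurable (p i))
    (hp_norm : ∀ i, ∫⁻ ε, ENNReal.ofReal (p i ε) = 1) (l : ι) :
    (volume.withDensity fun x => ∏ i, ENNReal.ofReal (p i (noise f x i))).map (noise f · l)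
      = volume.withDensity fun ε => ENNReal.ofReal (p l ε) := by
  have (i : ι) : IsProbabilityMeasure (volume.withDensity fun ε => ENNReal.ofReal (p i ε)) :=
    ⟨by rw [withDensity_apply _ .univ, Measure.restrict_univ, hp_norm i]⟩
  rw [show (noise f · l) = eval l ∘ noise f from rfl,
    ← Measure.map_map (measurable_pi_apply l) (measurable_noise hf_meas),
    map_noise_withDensity hPa hf_meas hf_dep rank hrank hp, (measurePreserving_eval _ l).map_eq]

theorem integral_comp_noise_mul_density (hPa : ∀ i, i ∉ Pa i)
    (hf_meas : ∀ i, Measurable (f i))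
    (hf_dep : ∀ i j, j ∉ Pa i → ∀ (x : ι → ℝ) (t : ℝ), f i (update x j t) = f i x)
    (rank : ι → α) (hrank : ∀ i j, j ∈ Pa i → rank j < rank i)
    {p : ι → ℝ → ℝ} (hp : ∀ i, Measurable (p i)) (hp_nonneg : ∀ i ε, 0 ≤ p i ε)
    (hp_norm : ∀ i, ∫ ε, p i ε = 1) (l : ι) {g : ℝ → ℝ} (hg : Measurable g) :
    ∫ x, g (noise f x l) * ∏ i, p i (noise f x i) = ∫ ε, g ε * p l ε := by
  have hp_norm' (i : ι) : ∫⁻ ε, ENNReal.ofReal (p i ε) = 1 := by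
    rw [← ofReal_integral_eq_lintegral_ofReal
      (Integrable.of_integral_ne_zero (by rw [hp_norm i]; exact one_ne_zero))
      (ae_of_all _ (hp_nonneg i)), hp_norm i, ENNReal.ofReal_one]
  have hdensity : Measurable fun x => ∏ i, p i (noise f x i) :=
    Finset.measurable_prod _ fun i _ =>
      (hp i).comp ((measurable_pi_apply i).comp (measurable_noise hf_meas))
  rw [integral_mul_eq_integral_withDensity_ofReal hdensity
      (fun x => prod_nonneg fun i _ => hp_nonneg i _),
    integral_mul_eq_integral_withDensity_ofReal (hp l) (hp_nonneg l),
    ← map_noise_apply_withDensity hPa hf_meas hf_dep rank hrank hp hp_norm' l,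
    integral_map (φ := (noise f · l))
      ((measurable_pi_apply l).comp (measurable_noise hf_meas)).aemeasurable
      hg.aestronglyMeasurable]
  simp only [ENNReal.ofReal_prod_of_nonneg fun i _ => hp_nonneg i _]

end ANM

open ANM in
/-- ANM leaf Hessian diagonal: if `l` is a leaf then
    `𝒟_l(x) = (log p_l)''(x_l − f_l(x))` for all `x`; moreover, if additionally
    the noise densities are normalized, the graph admits a topological order,
    and `ε ↦ (log p_l)''(ε) p_l(ε)` is integrable, then
    `∫ 𝒟_l(x) P(x) dx = ∫ (log p_l)''(ε) p_l(ε) dε`. -/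
theorem anm_leaf_hessian_expectation
    (D : ℕ) (Pa : Fin D → Set (Fin D))
    (hPa : ∀ i, i ∉ Pa i)
    (p : Fin D → ℝ → ℝ)
    (hp_pos : ∀ i ε, 0 < p i ε)
    (hp_smooth : ∀ i, ContDiff ℝ 2 (p i))
    (f : Fin D → (Fin D → ℝ) → ℝ)
    (hf_smooth : ∀ i, ContDiff ℝ 2 (f i))
    (hf_dep : ∀ i j, j ∉ Pa i → ∀ (x : Fin D → ℝ) (t : ℝ),
      f i (Function.update x j t) = f i x)
    (P : (Fin D → ℝ) → ℝ)
    (hP : ∀ x, P x = ∏ i, p i (x i - f i x))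
    (S : Fin D → (Fin D → ℝ) → ℝ)
    (hS : ∀ j x, S j x = deriv (fun t => Real.log (P (Function.update x j t))) (x j))
    (Dg : Fin D → (Fin D → ℝ) → ℝ)
    (hD : ∀ j x, Dg j x = deriv (fun t => S j (Function.update x j t)) (x j))
    (l : Fin D) (hleaf : ∀ i, l ∉ Pa i) :
    (∀ x : Fin D → ℝ,
        Dg l x = deriv (deriv (fun e => Real.log (p l e))) (x l - f l x))
    ∧ ((∀ i, ∫ ε : ℝ, p i ε = 1) →
        (∃ ord : Equiv.Perm (Fin D), ∀ i j, j ∈ Pa i → ord j < ord i) →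
        Integrable (fun ε : ℝ => deriv (deriv (fun e => Real.log (p l e))) ε * p l ε) →
        ∫ x : Fin D → ℝ, Dg l x * P x
          = ∫ ε : ℝ, deriv (deriv (fun e => Real.log (p l e))) ε * p l ε) := by
  set L : ℝ → ℝ := fun e => log (p l e)
  have hf_leaf (i : Fin D) := hf_dep i l (hleaf i)
  have hlogP (x : Fin D → ℝ) :
      log (P x) = L (x l - f l x) + ∑ i ∈ univ.erase l, log (p i (x i - f i x)) := by
    rw [hP, log_prod fun i _ => (hp_pos i _).ne']
    exact (add_sum_erase _ _ (mem_univ l)).symm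
  have hlogP_rest (x : Fin D → ℝ) (t : ℝ) :
      ∑ i ∈ univ.erase l, log (p i (update x l t i - f i (update x l t)))
        = ∑ i ∈ univ.erase l, log (p i (x i - f i x)) :=
    sum_congr rfl fun i hi => by rw [update_of_ne (ne_of_mem_erase hi), hf_leaf i]
  have hS_l (x : Fin D → ℝ) : S l x = deriv L (x l - f l x) :=
    (hS l x).trans (deriv_update_eq_of_eq_comp_sub_add l (hf_leaf l) hlogP_rest hlogP x)
  have hD_l (x : Fin D → ℝ) : Dg l x = deriv (deriv L) (x l - f l x) :=
    (hD l x).trans (deriv_update_eq_of_eq_comp_sub_add (d := 0) l (hf_leaf l)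
      (fun _ _ => rfl) (fun x => by rw [hS_l, Pi.zero_apply, add_zero]) x)
  refine ⟨hD_l, fun hp_norm ⟨ord, hord⟩ _ => ?_⟩
  simp only [hD_l, hP]
  exact integral_comp_noise_mul_density hPa (fun i => (hf_smooth i).continuous.measurable) hf_dep
    ord hord (fun i => (hp_smooth i).continuous.measurable) (fun i ε => (hp_pos i ε).le) hp_norm l
    (measurable_deriv _)
end
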